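/- arXiv:2009.13571 — 2 statements merged into one kernel-verified Lean document; each statement's English description precedes it below -/
import Mathlib

section
/- Let 0 ≤ a < b be real numbers and let Δ be a map on signals such that for every signal x in L²[0,∞), the image y := Δx is again a signal in L²[0,∞). Then the following are equivalent: (i) for all τ ∈ ℝ and all signals x in L²[0,∞), |∫₀^∞ (x − b⁻¹y)(t+τ)·(−a·x + y)(t) dt| ≤ ∫₀^∞ (x − b⁻¹y)(t)·(−a·x + y)(t) dt; (ii) for every z ∈ L¹(ℝ) with ‖z‖₁ ≤ 1 (no sign restriction on z), and every signal x in L²[0,∞), one has ⟨x − b⁻¹y, (−a·x + y) − z∗(−a·x + y)⟩ ≥ 0. -/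
open MeasureTheory Set

/-- A signal in L²[0,∞): square integrable over ℝ and vanishing on (−∞,0). -/
def IsSignal (x : ℝ → ℝ) : Prop :=
  MemLp x 2 volume ∧ ∀ t < (0:ℝ), x t = 0

/-- Convolution (z∗w)(t) = ∫ z(s)·w(t−s) ds. -/
noncomputable def conv (z w : ℝ → ℝ) : ℝ → ℝ := fun t => ∫ s, z s * w (t - s)

/-!
Put `u = x − b⁻¹·y` and `v = −a·x + y`. Since `v` vanishes on `(−∞, 0)`, the integrals in (i) are
values of the cross-correlation `R τ = ∫ u (t + τ) · v t`, and Fubini gives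
`⟨u, v − z ∗ v⟩ = R 0 − ∫ z · R`. So (ii) says `∫ z · R ≤ R 0` on the unit ball of `L¹`, which
follows from `|R| ≤ R 0`. Conversely `R` is continuous (translation is continuous on `L²`), and
testing against `±` the normalised indicators of `(τ, τ + ε]` gives `±R τ ≤ R 0` as `ε → 0`.
-/
open Filter
open scoped Topology

noncomputable def crossCorrelation (u v : ℝ → ℝ) (s : ℝ) : ℝ := ∫ t, u (t + s) * v t

section UnitBallOfL1

variable {R : ℝ → ℝ}

lemma integral_mul_le_of_forall_abs_le (hR : AEStronglyMeasurable R volume)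
    (hR0 : ∀ s, |R s| ≤ R 0) {z : ℝ → ℝ} (hz : Integrable z) (hz1 : ∫ t, |z t| ≤ 1) :
    ∫ s, z s * R s ≤ R 0 :=
  calc ∫ s, z s * R s
      ≤ ∫ s, |z s| * R 0 :=
        integral_mono (hz.mul_bdd hR (.of_forall hR0)) (hz.abs.mul_const _) fun s =>
          (le_abs_self _).trans <| (abs_mul _ _).trans_le <|
            mul_le_mul_of_nonneg_left (hR0 s) (abs_nonneg _)
    _ = (∫ s, |z s|) * R 0 := integral_mul_const _ _
    _ ≤ R 0 := mul_le_of_le_one_left ((abs_nonneg _).trans (hR0 0)) hz1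

lemma tendsto_inv_mul_intervalIntegral (hR : Continuous R) (τ : ℝ) :
    Tendsto (fun w => (w - τ)⁻¹ * ∫ s in τ..w, R s) (𝓝[>] τ) (𝓝 (R τ)) := by
  have hderiv : HasDerivAt (fun w => ∫ s in τ..w, R s) (R τ) τ :=
    intervalIntegral.integral_hasDerivAt_right (hR.intervalIntegrable _ _)
      (hR.stronglyMeasurableAtFilter _ _) hR.continuousAt
  refine ((hasDerivAt_iff_tendsto_slope.mp hderiv).mono_left
    (nhdsWithin_mono τ fun w hw => ne_of_gt (mem_Ioi.mp hw))).congr fun w => ?_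
  rw [slope_def_field, intervalIntegral.integral_same, sub_zero, div_eq_inv_mul]

lemma le_of_forall_integral_mul_le (hR : Continuous R) {c : ℝ}
    (h : ∀ z : ℝ → ℝ, Integrable z → ∫ t, |z t| ≤ 1 → ∫ s, z s * R s ≤ c) (τ : ℝ) :
    R τ ≤ c := by
  refine le_of_tendsto (tendsto_inv_mul_intervalIntegral hR τ) ?_
  filter_upwards [self_mem_nhdsWithin] with w (hw : τ < w)
  have hlen : 0 < w - τ := sub_pos.2 hw
  have hz : Integrable ((Ioc τ w).indicator fun _ => (w - τ)⁻¹) :=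
    (integrable_indicator_iff measurableSet_Ioc).2 (integrableOn_const measure_Ioc_lt_top.ne)
  have hz1 : ∫ t, |(Ioc τ w).indicator (fun _ => (w - τ)⁻¹) t| = 1 := by
    simp_rw [← Real.norm_eq_abs, norm_indicator_eq_indicator_norm, norm_inv,
      Real.norm_of_nonneg hlen.le]
    rw [integral_indicator measurableSet_Ioc, setIntegral_const, Real.volume_real_Ioc_of_le hw.le,
      smul_eq_mul, mul_inv_cancel₀ hlen.ne']
  have := h _ hz hz1.le
  simp_rw [← indicator_mul_left] at this
  rwa [integral_indicator measurableSet_Ioc, integral_const_mul,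
    ← intervalIntegral.integral_of_le hw.le] at this

theorem forall_abs_le_iff_forall_integral_mul_le (hR : Continuous R) :
    (∀ τ, |R τ| ≤ R 0) ↔
      ∀ z : ℝ → ℝ, Integrable z → ∫ t, |z t| ≤ 1 → ∫ s, z s * R s ≤ R 0 := by
  refine ⟨fun h z => integral_mul_le_of_forall_abs_le hR.aestronglyMeasurable h, fun h τ => ?_⟩
  have hneg : ∀ z : ℝ → ℝ, Integrable z → ∫ t, |z t| ≤ 1 → ∫ s, z s * -R s ≤ R 0 :=
    fun z hz hz1 => by simpa [integral_neg] using h (-z) hz.neg (by simpa using hz1)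
  exact abs_le.2 ⟨neg_le.1 (le_of_forall_integral_mul_le hR.neg hneg τ),
    le_of_forall_integral_mul_le hR h τ⟩

end UnitBallOfL1

section SquareIntegrable

variable {u v z : ℝ → ℝ}

lemma integral_abs_mul_le_eLpNorm_mul_eLpNorm (hu : MemLp u 2) (hv : MemLp v 2) :
    ∫ t, |u t * v t| ≤ (eLpNorm u 2 volume).toReal * (eLpNorm v 2 volume).toReal := by
  have hu' : MemLp (fun t => ‖u t‖) 2 := hu.norm
  have hv' : MemLp (fun t => ‖v t‖) 2 := hv.norm
  have hinner : ∫ t, |u t * v t| = inner ℝ (hu'.toLp _) (hv'.toLp _) := by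
    rw [L2.inner_def]
    refine integral_congr_ae ?_
    filter_upwards [hu'.coeFn_toLp, hv'.coeFn_toLp] with t h1 h2
    rw [h1, h2, abs_mul]
    simp [mul_comm]
  rw [hinner, ← eLpNorm_norm u, ← eLpNorm_norm v, ← Lp.norm_toLp, ← Lp.norm_toLp]
  exact real_inner_le_norm _ _

lemma integrable_mul_conv_integrand (hu : MemLp u 2) (hv : MemLp v 2) (hz : Integrable z) :
    Integrable (fun p : ℝ × ℝ => u p.1 * (z p.2 * v (p.1 - p.2))) (volume.prod volume) := by
  have hmeas : AEStronglyMeasurable (fun p : ℝ × ℝ => u p.1 * (z p.2 * v (p.1 - p.2)))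
      (volume.prod volume) := by
    have := hz.aestronglyMeasurable.convolution_integrand (ContinuousLinearMap.mul ℝ ℝ)
      hv.aestronglyMeasurable
    exact hu.aestronglyMeasurable.comp_fst.mul this
  have hshift : ∀ s, MemLp (fun t => v (t - s)) 2 := fun s =>
    hv.comp_measurePreserving (measurePreserving_sub_right volume s)
  rw [integrable_prod_iff' hmeas]
  refine ⟨.of_forall fun s => ?_, ?_⟩
  · exact ((hu.integrable_mul (hshift s)).const_mul (z s)).congr
      (.of_forall fun t => by simp only [Pi.mul_apply]; ring)
  · set C := (eLpNorm u 2 volume).toReal * (eLpNorm v 2 volume).toReal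
    refine (hz.norm.mul_const C).mono' hmeas.prod_swap.norm.integral_prod_right'
      (.of_forall fun s => ?_)
    have hbound : ∫ t, |u t * v (t - s)| ≤ C := by
      have := integral_abs_mul_le_eLpNorm_mul_eLpNorm hu (hshift s)
      have hnorm : eLpNorm (fun t => v (t - s)) 2 volume = eLpNorm v 2 volume :=
        eLpNorm_comp_measurePreserving hv.aestronglyMeasurable (measurePreserving_sub_right _ s)
      rwa [hnorm] at this
    calc ‖∫ t, ‖u t * (z s * v (t - s))‖‖ = ‖z s‖ * ∫ t, |u t * v (t - s)| := by
          rw [← integral_const_mul, Real.norm_of_nonneg (integral_nonneg fun _ => norm_nonneg _)]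
          simp only [norm_mul, Real.norm_eq_abs, abs_mul]
          congr 1 with t
          ring
      _ ≤ ‖z s‖ * C := by gcongr

lemma integral_mul_sub_conv (hu : MemLp u 2) (hv : MemLp v 2) (hz : Integrable z) :
    ∫ t, u t * (v t - conv z v t) =
      crossCorrelation u v 0 - ∫ s, z s * crossCorrelation u v s := by
  have hH := integrable_mul_conv_integrand hu hv hz
  have hleft : (fun t => ∫ s, u t * (z s * v (t - s))) = fun t => u t * conv z v t := by
    ext t
    rw [integral_const_mul, conv]
  have hright :
      (fun s => ∫ t, u t * (z s * v (t - s))) = fun s => z s * crossCorrelation u v s := by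
    ext s
    rw [crossCorrelation, ← integral_const_mul, ← integral_add_right_eq_self _ s]
    simp only [add_sub_cancel_right]
    congr 1 with t
    ring
  have hfubini : ∫ t, u t * conv z v t = ∫ s, z s * crossCorrelation u v s := by
    rw [← hleft, ← hright]
    exact integral_integral_swap hH
  have hconv : Integrable fun t => u t * conv z v t := hleft ▸ hH.integral_prod_left
  have hprod : Integrable fun t => u t * v t := hu.integrable_mul hv
  simp only [mul_sub, integral_sub hprod hconv, hfubini, crossCorrelation, add_zero]

lemma continuous_crossCorrelation (hu : MemLp u 2) (hv : MemLp v 2) :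
    Continuous (crossCorrelation u v) := by
  let shift : ℝ → C(ℝ, ℝ) := fun s => ⟨(· + s), continuous_id.add continuous_const⟩
  have hshift : ∀ s, MeasurePreserving (shift s) volume volume := fun s =>
    measurePreserving_add_right volume s
  have hcont : Continuous fun s => Lp.compMeasurePreserving (shift s) (hshift s) (hu.toLp u) :=
    Continuous.compMeasurePreservingLp continuous_const
      (ContinuousMap.continuous_of_continuous_uncurry _ (continuous_snd.add continuous_fst))
      hshift (by norm_num)
  convert hcont.inner (continuous_const (y := hv.toLp v)) with s
  rw [L2.inner_def, crossCorrelation]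
  refine integral_congr_ae ?_
  have hu_shift : (Lp.compMeasurePreserving (shift s) (hshift s) (hu.toLp u) : ℝ → ℝ)
      =ᵐ[volume] fun t => u (t + s) :=
    (Lp.coeFn_compMeasurePreserving _ (hshift s)).trans
      ((hshift s).quasiMeasurePreserving.ae_eq_comp hu.coeFn_toLp)
  filter_upwards [hu_shift, hv.coeFn_toLp] with t h1 h2
  rw [h1, h2, RCLike.inner_apply, conj_trivial, mul_comm]

lemma setIntegral_Ici_eq_crossCorrelation (hv0 : ∀ t < 0, v t = 0) (τ : ℝ) :
    ∫ t in Ici 0, u (t + τ) * v t = crossCorrelation u v τ :=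
  setIntegral_eq_integral_of_forall_compl_eq_zero fun t ht => by
    rw [hv0 t (not_le.1 ht), mul_zero]

theorem forall_abs_setIntegral_Ici_le_iff (hu : MemLp u 2) (hv : MemLp v 2)
    (hv0 : ∀ t < 0, v t = 0) :
    (∀ τ, |∫ t in Ici 0, u (t + τ) * v t| ≤ ∫ t in Ici 0, u t * v t) ↔
      ∀ z : ℝ → ℝ, Integrable z → ∫ t, |z t| ≤ 1 → 0 ≤ ∫ t, u t * (v t - conv z v t) := by
  have hτ0 : ∫ t in Ici 0, u t * v t = crossCorrelation u v 0 := by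
    simpa using setIntegral_Ici_eq_crossCorrelation (u := u) hv0 0
  simp only [setIntegral_Ici_eq_crossCorrelation hv0, hτ0,
    forall_abs_le_iff_forall_integral_mul_le (continuous_crossCorrelation hu hv)]
  refine forall_congr' fun z => imp_congr_right fun hz => imp_congr_right fun _ => ?_
  rw [integral_mul_sub_conv hu hv hz, sub_nonneg]

end SquareIntegrable

theorem slope_iqc_characterization_odd_general
    (a b : ℝ)
    (Δ : (ℝ → ℝ) → (ℝ → ℝ))
    (hΔ : ∀ x, IsSignal x → IsSignal (Δ x)) :
    (∀ (τ : ℝ) (x : ℝ → ℝ), IsSignal x →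
      |∫ t in Ici (0:ℝ), (x (t + τ) - b⁻¹ * Δ x (t + τ)) * (-a * x t + Δ x t)|
        ≤ ∫ t in Ici (0:ℝ), (x t - b⁻¹ * Δ x t) * (-a * x t + Δ x t))
    ↔
    (∀ z : ℝ → ℝ, Integrable z → (∫ t, |z t|) ≤ 1 →
      ∀ x : ℝ → ℝ, IsSignal x →
        0 ≤ ∫ t, (x t - b⁻¹ * Δ x t) *
          ((-a * x t + Δ x t) - conv z (fun s => -a * x s + Δ x s) t)) := by
  have hsignal (x : ℝ → ℝ) (hx : IsSignal x) :=
    have hy := hΔ x hx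
    forall_abs_setIntegral_Ici_le_iff (u := fun t => x t - b⁻¹ * Δ x t)
      (v := fun t => -a * x t + Δ x t) (hx.1.sub (hy.1.const_mul _))
      ((hx.1.const_mul _).add hy.1) fun t ht => by simp [hx.2 t ht, hy.2 t ht]
  constructor
  · intro h z hz hz1 x hx
    exact (hsignal x hx).1 (fun τ => h τ x hx) z hz hz1
  · intro h τ x hx
    exact (hsignal x hx).2 (fun z hz hz1 => h z hz hz1 x hx) τ

theorem slope_iqc_characterization_odd
    (a b : ℝ) (ha : 0 ≤ a) (hab : a < b)
    (Δ : (ℝ → ℝ) → (ℝ → ℝ))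
    (hΔ : ∀ x, IsSignal x → IsSignal (Δ x)) :
    (∀ (τ : ℝ) (x : ℝ → ℝ), IsSignal x →
      |∫ t in Ici (0:ℝ), (x (t + τ) - b⁻¹ * Δ x (t + τ)) * (-a * x t + Δ x t)|
        ≤ ∫ t in Ici (0:ℝ), (x t - b⁻¹ * Δ x t) * (-a * x t + Δ x t))
    ↔
    (∀ z : ℝ → ℝ, Integrable z → (∫ t, |z t|) ≤ 1 →
      ∀ x : ℝ → ℝ, IsSignal x →
        0 ≤ ∫ t, (x t - b⁻¹ * Δ x t) *
          ((-a * x t + Δ x t) - conv z (fun s => -a * x s + Δ x s) t)) :=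
  slope_iqc_characterization_odd_general a b Δ hΔ
end

section
/- Let 0 ≤ a < b be real numbers and let φ : ℝ → ℝ be measurable with φ(0) = 0, and suppose there exists C ≥ 0 such that |φ(u)| ≤ C·|u| for all u ∈ ℝ. Then the following are equivalent: (i) for all τ ∈ ℝ and all signals x in L²[0,∞), writing y(t) := φ(x(t)), ∫₀^∞ (x − b⁻¹y)(t+τ)·(−a·x + y)(t) dt ≤ ∫₀^∞ (x − b⁻¹y)(t)·(−a·x + y)(t) dt; (ii) φ is slope-restricted in [a,b], i.e. for all x₁, x₂ ∈ ℝ with x₁ ≠ x₂, a ≤ (φ(x₁) − φ(x₂))/(x₁ − x₂) ≤ b. -/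
/-!
Put h(u) = u - φ(u)/b and L = (b - a)/b, so that -a u + φ(u) = b (L u - h(u)); φ has slopes in
[a, b] exactly when h has slopes in [0, L].

If it does, the primitive H of h is convex and L-smooth, whence
(h q - h p)² ≤ 2L (H q - H p - h(p)(q - p)), i.e. h(p) (g q - g p) ≤ V q - V p for g = L·id - h
and V = L H - h²/2. With p = x(t + τ), q = x(t), integrate over ℝ (the integrands vanish for
t < 0): translation invariance cancels the two integrals of V.

Conversely, test the inequality with τ = 1 on the signal taking the values u, v, u, v, …, u on
2n + 1 consecutive unit intervals. It gives n · (cross terms) ≤ n · (diagonal terms) + const for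
every n, hence (h u - h v)((-a u + φ u) - (-a v + φ v)) ≥ 0; this product is
(u - v)² (b - s)(s - a)/b for the slope s of φ between u and v.
-/

open MeasureTheory Set

open scoped NNReal

section SlopeInterval

variable {h : ℝ → ℝ} {L : ℝ≥0}

theorem lipschitzWith_of_monotone_of_monotone_sub (hh : Monotone h)
    (hLh : Monotone fun s => L * s - h s) : LipschitzWith L h := by
  refine LipschitzWith.of_le_add_mul L fun x y => ?_
  rcases le_total x y with hxy | hyx
  · exact le_add_of_le_of_nonneg (hh hxy) (by positivity)
  · have := hLh hyx
    rw [Real.dist_eq, abs_of_nonneg (sub_nonneg.2 hyx)]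
    linarith

theorem sq_sub_le_two_mul_integral_of_le (hh : Monotone h)
    (hLh : Monotone fun s => L * s - h s) {p q : ℝ} (hpq : p ≤ q) :
    (h q - h p) ^ 2 ≤ 2 * L * ∫ s in p..q, (h s - h p) := by
  set δ := h q - h p
  have hδ : 0 ≤ δ := sub_nonneg.2 (hh hpq)
  have hδL : δ ≤ L * (q - p) := by have := hLh hpq; linarith
  -- For s ≤ q, h s - h p ≥ δ - L (q - s); this bound is nonnegative on [q - r, q].
  obtain ⟨r, hr, hrqp, hLr⟩ : ∃ r, 0 ≤ r ∧ r ≤ q - p ∧ L * r = δ := by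
    rcases eq_or_ne (L : ℝ) 0 with hL | hL
    · exact ⟨0, le_rfl, by linarith, by rw [hL] at hδL; linarith⟩
    · have hL : 0 < (L : ℝ) := lt_of_le_of_ne L.coe_nonneg (Ne.symm hL)
      exact ⟨δ / L, by positivity, (div_le_iff₀' hL).2 hδL, mul_div_cancel₀ δ hL.ne'⟩
  have hint : ∀ c d : ℝ, IntervalIntegrable (fun s => h s - h p) volume c d :=
    fun c d => (hh.add_const (-h p)).intervalIntegrable
  calc (h q - h p) ^ 2 = 2 * L * (δ * r - L * r ^ 2 / 2) := by
        linear_combination ((L:ℝ) * r - δ) * hLr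
    _ = 2 * L * ∫ s in (q - r)..q, (δ - L * (q - s)) := by
        rw [intervalIntegral.integral_comp_sub_left (fun y => δ - L * y)]
        simp only [sub_self, sub_sub_cancel]
        rw [intervalIntegral.integral_sub intervalIntegrable_const
          ((continuous_const_mul _).intervalIntegrable _ _),
          intervalIntegral.integral_const, intervalIntegral.integral_const_mul, integral_id,
          smul_eq_mul]
        ring
    _ ≤ 2 * L * ∫ s in (q - r)..q, (h s - h p) := by
        gcongr
        refine intervalIntegral.integral_mono_on (by linarith)
          ((by fun_prop : Continuous fun s => δ - L * (q - s)).intervalIntegrable _ _) (hint _ _) ?_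
        intro s hs
        have := hLh hs.2
        linarith
    _ ≤ 2 * L * ∫ s in p..q, (h s - h p) := by
        gcongr
        rw [← intervalIntegral.integral_add_adjacent_intervals (hint p (q - r)) (hint _ _)]
        refine le_add_of_nonneg_left (intervalIntegral.integral_nonneg (by linarith) ?_)
        intro s hs
        exact sub_nonneg.2 (hh hs.1)

theorem sq_sub_le_two_mul_integral (hh : Monotone h)
    (hLh : Monotone fun s => L * s - h s) (p q : ℝ) :
    (h q - h p) ^ 2 ≤ 2 * L * ∫ s in p..q, (h s - h p) := by
  rcases le_total p q with hpq | hqp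
  · exact sq_sub_le_two_mul_integral_of_le hh hLh hpq
  · have hh' : Monotone fun s => -h (-s) := fun x y hxy => neg_le_neg (hh (neg_le_neg hxy))
    have hLh' : Monotone fun s => L * s - -h (-s) := fun x y hxy => by
      have := hLh (neg_le_neg hxy)
      simp only [mul_neg] at this
      linarith
    have := sq_sub_le_two_mul_integral_of_le hh' hLh' (neg_le_neg hqp)
    rw [intervalIntegral.integral_comp_neg (fun s => -h s - -h (- -p)),
      intervalIntegral.integral_symm] at this
    simp only [neg_neg] at this
    calc (h q - h p) ^ 2 = (-h q - -h p) ^ 2 := by ring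
      _ ≤ _ := this
      _ = _ := by
        rw [← intervalIntegral.integral_neg]
        congr 2 with s
        ring

noncomputable def slopePotential (L : ℝ) (h : ℝ → ℝ) (q : ℝ) : ℝ :=
  L * (∫ s in (0:ℝ)..q, h s) - h q ^ 2 / 2

theorem mul_sub_le_slopePotential_sub (hh : Monotone h)
    (hLh : Monotone fun s => L * s - h s) (p q : ℝ) :
    h p * ((L * q - h q) - (L * p - h p)) ≤ slopePotential L h q - slopePotential L h p := by
  have hint : ∀ c d : ℝ, IntervalIntegrable h volume c d := fun _ _ => hh.intervalIntegrable
  have hsplit : ∫ s in p..q, (h s - h p) =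
      (∫ s in (0:ℝ)..q, h s) - (∫ s in (0:ℝ)..p, h s) - (q - p) * h p := by
    rw [intervalIntegral.integral_sub (hint p q) intervalIntegrable_const,
      intervalIntegral.integral_interval_sub_left (hint 0 q) (hint 0 p),
      intervalIntegral.integral_const, smul_eq_mul]
  have := sq_sub_le_two_mul_integral hh hLh p q
  rw [hsplit] at this
  rw [slopePotential, slopePotential]
  nlinarith [this]

theorem integrable_slopePotential_comp {α : Type*} [MeasurableSpace α] {μ : Measure α}
    (hh : Monotone h) (hLh : Monotone fun s => L * s - h s) (h0 : h 0 = 0)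
    {y : α → ℝ} (hy : MemLp y 2 μ) : Integrable (fun t => slopePotential L h (y t)) μ := by
  have hlip := lipschitzWith_of_monotone_of_monotone_sub hh hLh
  have hprim : Continuous fun q => ∫ s in (0:ℝ)..q, h s :=
    intervalIntegral.continuous_primitive (fun _ _ => hh.intervalIntegrable) 0
  have hbound : ∀ q, ‖∫ s in (0:ℝ)..q, h s‖ ≤ L * q ^ 2 := by
    intro q
    have hle : ∀ s ∈ uIoc (0:ℝ) q, ‖h s‖ ≤ L * |q| := by
      intro s hs
      have hs : |s - 0| ≤ |q - 0| := abs_sub_left_of_mem_uIcc (uIoc_subset_uIcc hs)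
      have := hlip.dist_le_mul s 0
      rw [Real.dist_eq, Real.dist_eq, h0] at this
      simp only [sub_zero] at hs this
      exact this.trans (by gcongr)
    have := intervalIntegral.norm_integral_le_of_norm_le_const hle
    rwa [sub_zero, mul_assoc, abs_mul_abs_self, ← sq] at this
  have hprim_int : Integrable (fun t => ∫ s in (0:ℝ)..y t, h s) μ :=
    (hy.integrable_sq.const_mul L).mono' (hprim.comp_aestronglyMeasurable hy.1)
      (ae_of_all _ fun t => hbound (y t))
  exact (hprim_int.const_mul L).sub ((hlip.comp_memLp h0 hy).integrable_sq.div_const 2)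

theorem integral_mul_comp_add_le (hh : Monotone h) (hLh : Monotone fun s => L * s - h s)
    (h0 : h 0 = 0) {x : ℝ → ℝ} (hx : MemLp x 2 volume) (τ : ℝ) :
    ∫ t, h (x (t + τ)) * (L * x t - h (x t)) ≤ ∫ t, h (x t) * (L * x t - h (x t)) := by
  set g : ℝ → ℝ := fun s => L * s - h s
  set V := slopePotential L h
  have hlip := lipschitzWith_of_monotone_of_monotone_sub hh hLh
  have hglip : LipschitzWith L g :=
    lipschitzWith_of_monotone_of_monotone_sub hLh (by simpa [g] using hh)
  have hmemLp : ∀ {y : ℝ → ℝ}, MemLp y 2 volume →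
      MemLp (h ∘ y) 2 volume ∧ MemLp (g ∘ y) 2 volume :=
    fun hy => ⟨hlip.comp_memLp h0 hy, hglip.comp_memLp (by simp [g, h0]) hy⟩
  have hxτ : MemLp (fun t => x (t + τ)) 2 volume :=
    hx.comp_measurePreserving (measurePreserving_add_right volume τ)
  have hdiag : Integrable (fun t => h (x (t + τ)) * g (x (t + τ))) :=
    (hmemLp hxτ).1.integrable_mul (hmemLp hxτ).2
  have hVx := integrable_slopePotential_comp hh hLh h0 hx
  have hVxτ := integrable_slopePotential_comp hh hLh h0 hxτ
  have hV : Integrable fun t => V (x t) - V (x (t + τ)) := hVx.sub hVxτ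
  calc ∫ t, h (x (t + τ)) * g (x t)
      ≤ ∫ t, (h (x (t + τ)) * g (x (t + τ)) + (V (x t) - V (x (t + τ)))) := by
        refine integral_mono ((hmemLp hxτ).1.integrable_mul (hmemLp hx).2) (hdiag.add hV)
          fun t => ?_
        have := mul_sub_le_slopePotential_sub hh hLh (x (t + τ)) (x t)
        simp only [g, V] at this ⊢
        linarith
    _ = ∫ t, h (x t) * g (x t) := by
        rw [integral_add hdiag hV, integral_sub hVx hVxτ,
          integral_add_right_eq_self (fun t => h (x t) * g (x t)) τ,
          integral_add_right_eq_self (fun t => V (x t)) τ, sub_self, add_zero]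

end SlopeInterval

section Slope

variable {a b : ℝ} {φ : ℝ → ℝ}

theorem monotone_of_slope_mem_Icc
    (hslope : ∀ x₁ x₂ : ℝ, x₁ ≠ x₂ →
      a ≤ (φ x₁ - φ x₂) / (x₁ - x₂) ∧ (φ x₁ - φ x₂) / (x₁ - x₂) ≤ b) :
    Monotone (fun u => φ u - a * u) ∧ Monotone (fun u => b * u - φ u) := by
  have key : ∀ u v, u < v → a * (v - u) ≤ φ v - φ u ∧ φ v - φ u ≤ b * (v - u) := by
    intro u v huv
    have hd : 0 < v - u := sub_pos.2 huv
    obtain ⟨hlo, hhi⟩ := hslope v u huv.ne'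
    exact ⟨(le_div_iff₀ hd).1 hlo, (div_le_iff₀ hd).1 hhi⟩
  constructor <;> intro u v huv <;> rcases huv.eq_or_lt with rfl | huv
  · exact le_rfl
  · linarith [key u v huv]
  · exact le_rfl
  · linarith [key u v huv]

theorem setIntegral_shift_le_of_monotone (hb : 0 < b) (hab : a ≤ b) (hφ0 : φ 0 = 0)
    (hlo : Monotone fun u => φ u - a * u) (hhi : Monotone fun u => b * u - φ u)
    {x : ℝ → ℝ} (hx : IsSignal x) (τ : ℝ) :
    ∫ t in Ici (0:ℝ), (x (t + τ) - b⁻¹ * φ (x (t + τ))) * (-a * x t + φ (x t))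
      ≤ ∫ t in Ici (0:ℝ), (x t - b⁻¹ * φ (x t)) * (-a * x t + φ (x t)) := by
  set L : ℝ≥0 := ⟨(b - a) / b, div_nonneg (sub_nonneg.2 hab) hb.le⟩
  have hL : (L : ℝ) = (b - a) / b := rfl
  have hh : Monotone fun u => u - b⁻¹ * φ u := by
    convert hhi.const_mul (inv_nonneg.2 hb.le) using 2
    field_simp
  have hLh : Monotone fun u => L * u - (u - b⁻¹ * φ u) := by
    convert hlo.const_mul (inv_nonneg.2 hb.le) using 2
    rw [hL]
    field_simp
    ring
  have hfactor : ∀ p q, (p - b⁻¹ * φ p) * (-a * q + φ q) =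
      b * ((p - b⁻¹ * φ p) * (L * q - (q - b⁻¹ * φ q))) := by
    intro p q
    rw [hL]
    field_simp
    ring
  have hvanish : ∀ y : ℝ → ℝ, ∀ t ∉ Ici (0:ℝ), y t * (-a * x t + φ (x t)) = 0 := by
    intro y t ht
    rw [hx.2 t (not_le.1 ht), hφ0, mul_zero, zero_add, mul_zero]
  rw [setIntegral_eq_integral_of_forall_compl_eq_zero
      (hvanish fun t => x (t + τ) - b⁻¹ * φ (x (t + τ))),
    setIntegral_eq_integral_of_forall_compl_eq_zero (hvanish fun t => x t - b⁻¹ * φ (x t))]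
  simp only [hfactor, MeasureTheory.integral_const_mul]
  exact mul_le_mul_of_nonneg_left (integral_mul_comp_add_le hh hLh (by simp [hφ0]) hx.1 τ) hb.le

end Slope

section StepSignal

variable {c : ℕ → ℝ} {m : ℕ}

noncomputable def stepSignal (c : ℕ → ℝ) : ℝ → ℝ :=
  (Ici 0).indicator fun t => c ⌊t⌋₊

theorem stepSignal_of_nonneg {t : ℝ} (ht : 0 ≤ t) : stepSignal c t = c ⌊t⌋₊ :=
  indicator_of_mem (mem_Ici.2 ht) _

theorem stepSignal_eq_sum (hc : ∀ j, m ≤ j → c j = 0) :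
    stepSignal c = fun t =>
      ∑ j ∈ Finset.range m, (Ico (j : ℝ) (j + 1)).indicator (fun _ => c j) t := by
  funext t
  have hmem : ∀ j : ℕ, t ∈ Ico (j : ℝ) (j + 1) ↔ 0 ≤ t ∧ ⌊t⌋₊ = j := by
    intro j
    constructor
    · intro hj
      have ht : 0 ≤ t := (Nat.cast_nonneg j).trans hj.1
      exact ⟨ht, (Nat.floor_eq_iff ht).2 hj⟩
    · rintro ⟨ht, rfl⟩
      exact (Nat.floor_eq_iff ht).1 rfl
  by_cases ht : 0 ≤ t
  · rw [stepSignal, indicator_of_mem (mem_Ici.2 ht), Finset.sum_eq_single ⌊t⌋₊]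
    · rw [indicator_of_mem ((hmem _).2 ⟨ht, rfl⟩)]
    · intro j _ hj
      exact indicator_of_notMem (fun h => hj ((hmem j).1 h).2.symm) _
    · intro hj
      rw [indicator_of_mem ((hmem _).2 ⟨ht, rfl⟩), hc _ (by simpa using hj)]
  · rw [stepSignal, indicator_of_notMem (by simpa using ht)]
    exact (Finset.sum_eq_zero fun j _ =>
      indicator_of_notMem (fun h => ht ((hmem j).1 h).1) _).symm

theorem isSignal_stepSignal (hc : ∀ j, m ≤ j → c j = 0) : IsSignal (stepSignal c) := by
  refine ⟨?_, fun t ht => indicator_of_notMem (not_le.2 ht) _⟩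
  rw [stepSignal_eq_sum hc]
  exact memLp_finsetSum _ fun j _ =>
    memLp_indicator_const 2 measurableSet_Ico (c j) (Or.inr (by simp))

theorem setIntegral_Ici_natFloor (hc : ∀ j, m ≤ j → c j = 0) :
    ∫ t in Ici (0:ℝ), c ⌊t⌋₊ = ∑ j ∈ Finset.range m, c j := by
  rw [← integral_indicator measurableSet_Ici]
  change ∫ t, stepSignal c t = _
  rw [stepSignal_eq_sum hc, integral_finsetSum]
  · refine Finset.sum_congr rfl fun j _ => ?_
    rw [integral_indicator_const _ measurableSet_Ico]
    simp
  · exact fun j _ =>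
      (integrable_indicator_iff measurableSet_Ico).2 (integrableOn_const measure_Ico_lt_top.ne)

end StepSignal

theorem Function.Periodic.sum_range_two_mul {f : ℕ → ℝ} (hf : Function.Periodic f 2) (n : ℕ) :
    ∑ j ∈ Finset.range (2 * n), f j = n * (f 0 + f 1) := by
  induction n with
  | zero => simp
  | succ n ih =>
    rw [mul_add_one, Finset.sum_range_succ, Finset.sum_range_succ, ih]
    have h0 := hf.nat_mul n 0
    have h1 := hf.nat_mul n 1
    simp only [zero_add, Nat.cast_id] at h0 h1
    rw [mul_comm 2 n, h0, add_comm (n * 2) 1, h1]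
    push_cast
    ring

theorem le_of_forall_nat_mul_le_add {A B C : ℝ} (h : ∀ n : ℕ, n * A ≤ n * B + C) : A ≤ B := by
  by_contra! hlt
  obtain ⟨n, hn⟩ := exists_nat_gt (C / (A - B))
  rw [div_lt_iff₀ (sub_pos.2 hlt)] at hn
  linarith [h n]

theorem add_le_add_of_forall_setIntegral_shift_le {F : ℝ → ℝ → ℝ} (hF : ∀ q, F 0 q = 0)
    (H : ∀ x, IsSignal x →
      ∫ t in Ici (0:ℝ), F (x (t + 1)) (x t) ≤ ∫ t in Ici (0:ℝ), F (x t) (x t))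
    (u v : ℝ) : F u v + F v u ≤ F u u + F v v := by
  refine le_of_forall_nat_mul_le_add (C := F u u) fun n => ?_
  let alt : ℕ → ℝ := fun j => if Even j then u else v
  have halt : Function.Periodic alt 2 := fun j => by simp [alt, Nat.even_add]
  let c : ℕ → ℝ := fun j => if j < 2 * n + 1 then alt j else 0
  have hc : ∀ j, 2 * n + 1 ≤ j → c j = 0 := fun j hj => if_neg (by omega)
  have hcalt : ∀ j < 2 * n + 1, c j = alt j := fun j hj => if_pos hj
  have hcross : ∫ t in Ici (0:ℝ), F (stepSignal c (t + 1)) (stepSignal c t) =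
      n * (F u v + F v u) := by
    calc _ = ∫ t in Ici (0:ℝ), F (c (⌊t⌋₊ + 1)) (c ⌊t⌋₊) :=
          setIntegral_congr_fun measurableSet_Ici fun t (ht : 0 ≤ t) => by
            rw [stepSignal_of_nonneg ht, stepSignal_of_nonneg (by linarith), Nat.floor_add_one ht]
      _ = ∑ j ∈ Finset.range (2 * n + 1), F (c (j + 1)) (c j) :=
          setIntegral_Ici_natFloor (c := fun j => F (c (j + 1)) (c j)) fun j hj => by
            rw [hc (j + 1) (by omega), hF]
      _ = ∑ j ∈ Finset.range (2 * n), F (alt (j + 1)) (alt j) := by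
          rw [Finset.sum_range_succ, hc _ le_rfl, hF, add_zero]
          refine Finset.sum_congr rfl fun j hj => ?_
          rw [Finset.mem_range] at hj
          rw [hcalt j (by omega), hcalt (j + 1) (by omega)]
      _ = n * (F u v + F v u) := by
          have hper : Function.Periodic (fun j => F (alt (j + 1)) (alt j)) 2 := fun j => by
            simp only [add_right_comm j 2 1, halt (j + 1), halt j]
          rw [hper.sum_range_two_mul n, add_comm]
          simp [alt]
  have hdiag : ∫ t in Ici (0:ℝ), F (stepSignal c t) (stepSignal c t) =
      n * (F u u + F v v) + F u u := by
    calc _ = ∫ t in Ici (0:ℝ), F (c ⌊t⌋₊) (c ⌊t⌋₊) :=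
          setIntegral_congr_fun measurableSet_Ici fun t (ht : 0 ≤ t) => by
            rw [stepSignal_of_nonneg ht]
      _ = ∑ j ∈ Finset.range (2 * n + 1), F (c j) (c j) :=
          setIntegral_Ici_natFloor (c := fun j => F (c j) (c j)) fun j hj => by
            rw [hc j hj, hF]
      _ = ∑ j ∈ Finset.range (2 * n), F (alt j) (alt j) + F u u := by
          rw [Finset.sum_range_succ, hcalt _ (by omega)]
          refine congrArg₂ _ (Finset.sum_congr rfl fun j hj => ?_) (by simp [alt])
          rw [Finset.mem_range] at hj
          rw [hcalt j (by omega)]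
      _ = n * (F u u + F v v) + F u u := by
          have hper : Function.Periodic (fun j => F (alt j) (alt j)) 2 := fun j => by
            simp only [halt j]
          rw [hper.sum_range_two_mul n]
          simp [alt]
  have := H _ (isSignal_stepSignal hc)
  rw [hcross, hdiag] at this
  linarith

theorem slope_mem_Icc_of_cross_le {a b : ℝ} {φ : ℝ → ℝ} (hb : 0 < b) (hab : a ≤ b) {u v : ℝ}
    (huv : u ≠ v)
    (hcross : (u - b⁻¹ * φ u) * (-a * v + φ v) + (v - b⁻¹ * φ v) * (-a * u + φ u) ≤
      (u - b⁻¹ * φ u) * (-a * u + φ u) + (v - b⁻¹ * φ v) * (-a * v + φ v)) :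
    a ≤ (φ u - φ v) / (u - v) ∧ (φ u - φ v) / (u - v) ≤ b := by
  set s := (φ u - φ v) / (u - v)
  have hd : u - v ≠ 0 := sub_ne_zero.2 huv
  have hφ : φ u = φ v + s * (u - v) := by
    simp only [s]
    field_simp
    ring
  have hprod : 0 ≤ (b - s) * (s - a) * (u - v) ^ 2 := by
    have key : (b - s) * (s - a) * (u - v) ^ 2 =
        b * ((u - b⁻¹ * φ u) * (-a * u + φ u) + (v - b⁻¹ * φ v) * (-a * v + φ v)
          - ((u - b⁻¹ * φ u) * (-a * v + φ v) + (v - b⁻¹ * φ v) * (-a * u + φ u))) := by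
      rw [hφ]
      field_simp
      ring
    rw [key]
    exact mul_nonneg hb.le (sub_nonneg.2 hcross)
  have hs : 0 ≤ (b - s) * (s - a) :=
    (mul_nonneg_iff_of_pos_right (sq_pos_of_ne_zero hd)).1 hprod
  constructor <;> nlinarith

theorem static_slope_ineq_iff_slope_restricted_general
    (a b : ℝ) (ha : 0 ≤ a) (hab : a < b)
    (φ : ℝ → ℝ) (hφ0 : φ 0 = 0) :
    (∀ (τ : ℝ) (x : ℝ → ℝ), IsSignal x →
      ∫ t in Ici (0:ℝ), (x (t + τ) - b⁻¹ * φ (x (t + τ))) * (-a * x t + φ (x t))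
        ≤ ∫ t in Ici (0:ℝ), (x t - b⁻¹ * φ (x t)) * (-a * x t + φ (x t)))
    ↔
    (∀ x₁ x₂ : ℝ, x₁ ≠ x₂ →
      a ≤ (φ x₁ - φ x₂) / (x₁ - x₂) ∧ (φ x₁ - φ x₂) / (x₁ - x₂) ≤ b) := by
  have hb : 0 < b := ha.trans_lt hab
  constructor
  · intro H x₁ x₂ hne
    refine slope_mem_Icc_of_cross_le hb hab.le hne ?_
    exact add_le_add_of_forall_setIntegral_shift_le
      (F := fun p q => (p - b⁻¹ * φ p) * (-a * q + φ q)) (fun q => by simp [hφ0])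
      (H 1) x₁ x₂
  · intro hslope τ x hx
    obtain ⟨hlo, hhi⟩ := monotone_of_slope_mem_Icc hslope
    exact setIntegral_shift_le_of_monotone hb hab.le hφ0 hlo hhi hx τ

theorem static_slope_ineq_iff_slope_restricted
    (a b : ℝ) (ha : 0 ≤ a) (hab : a < b)
    (φ : ℝ → ℝ) (hφ : Measurable φ) (hφ0 : φ 0 = 0)
    (hbound : ∃ C : ℝ, 0 ≤ C ∧ ∀ u : ℝ, |φ u| ≤ C * |u|) :
    (∀ (τ : ℝ) (x : ℝ → ℝ), IsSignal x →
      ∫ t in Ici (0:ℝ), (x (t + τ) - b⁻¹ * φ (x (t + τ))) * (-a * x t + φ (x t))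
        ≤ ∫ t in Ici (0:ℝ), (x t - b⁻¹ * φ (x t)) * (-a * x t + φ (x t)))
    ↔
    (∀ x₁ x₂ : ℝ, x₁ ≠ x₂ →
      a ≤ (φ x₁ - φ x₂) / (x₁ - x₂) ∧ (φ x₁ - φ x₂) / (x₁ - x₂) ≤ b) :=
  static_slope_ineq_iff_slope_restricted_general a b ha hab φ hφ0
end
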